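/- (Key Theorem) Let K be an infinite polyring, n ≥ 1, and A ⊆ Kⁿ finite-valued, meaning there is an index j < n such that for every fixing of the other n−1 coordinates, the set of j-th coordinates a_j with (a₀,…,a_{n-1}) ∈ A is finite. Then A has empty interior in the Zariski topology of Kⁿ. -/

import Mathlib

/-- Terms over a polyring signature: variables, constants from `K` (including
`0`), addition, and extra operations indexed by `ι` with arities `ar`. -/
inductive PTerm (K ι : Type) (ar : ι → ℕ) (n : ℕ) : Type
  | var : Fin n → PTerm K ι ar n
  | const : K → PTerm K ι ar n
  | add : PTerm K ι ar n → PTerm K ι ar n → PTerm K ι ar n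
  | op (i : ι) : (Fin (ar i) → PTerm K ι ar n) → PTerm K ι ar n

variable {K ι : Type} {ar : ι → ℕ} {n : ℕ}

/-- Evaluation of a term at a point of `Kⁿ`. -/
def PTerm.eval [AddCommGroup K] (ops : ∀ i, (Fin (ar i) → K) → K) :
    PTerm K ι ar n → (Fin n → K) → K
  | .var j, a => a j
  | .const c, _ => c
  | .add s t, a => s.eval ops a + t.eval ops a
  | .op i ts, a => ops i fun j => (ts j).eval ops a

/-- A monomial is a term not containing `+`. -/
def PTerm.IsMonomial : PTerm K ι ar n → Prop
  | .var _ => True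
  | .const _ => True
  | .add _ _ => False
  | .op _ ts => ∀ j, (ts j).IsMonomial

/-- A polynomial is a finite sum of monomials. -/
def PTerm.IsPolynomial : PTerm K ι ar n → Prop
  | .add s t => s.IsPolynomial ∧ t.IsPolynomial
  | t => t.IsMonomial

/-- Degree bookkeeping: the number of occurrences of variables from `V` in a
monomial, extended to sums by taking the maximum of the summands (so on
polynomials this computes the degree w.r.t. `V`). -/
def PTerm.occ : PTerm K ι ar n → Finset (Fin n) → ℕ
  | .var j, V => if j ∈ V then 1 else 0
  | .const _, _ => 0
  | .add s t, V => max (s.occ V) (t.occ V)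
  | .op _ ts, V => ∑ j, (ts j).occ V

/-- The degree of a term w.r.t. a set `V` of variables: the minimal degree
w.r.t. `V` of a polynomial representing (inducing the same function as) it. -/
noncomputable def PTerm.degree [AddCommGroup K] (ops : ∀ i, (Fin (ar i) → K) → K)
    (F : PTerm K ι ar n) (V : Finset (Fin n)) : ℕ :=
  sInf {d | ∃ P : PTerm K ι ar n, P.IsPolynomial ∧
    (∀ a, P.eval ops a = F.eval ops a) ∧ P.occ V ≤ d}

/-- The polyring condition: each extra operation is distributive w.r.t. `+`,
i.e. additive in every argument. -/
def IsPolyring [AddCommGroup K] (ops : ∀ i, (Fin (ar i) → K) → K) : Prop :=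
  ∀ (i : ι) (j : Fin (ar i)) (a : Fin (ar i) → K) (x y : K),
    ops i (Function.update a j (x + y)) =
      ops i (Function.update a j x) + ops i (Function.update a j y)

/-- The Zariski topology on `Kⁿ`: root sets of terms form a closed subbase,
so the closed sets are the intersections of finite unions of root sets. -/
def zariskiTopology [AddCommGroup K] (ops : ∀ i, (Fin (ar i) → K) → K) (n : ℕ) :
    TopologicalSpace (Fin n → K) :=
  TopologicalSpace.generateFrom
    {U | ∃ F : PTerm K ι ar n, U = {a | F.eval ops a = 0}ᶜ}

/-!
On the line `y ↦ x + Pi.single j y` through a point `x`, every term restricts to a polynomial map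
`K → K` in the finite-difference sense (some iterated difference vanishes), because the operations
are additive in each argument. If `x` were interior to `A`, finitely many terms `F` with `F x ≠ 0`
would cut out a neighbourhood of `x` inside `A`; since the section of `A` along the line is finite,
all but finitely many points of the line would lie in the zero set of one of these `F`.
Take a sequence in `K` none of whose finite sums is `0`. By Hindman's theorem, some subsequence
has all its finite sums in a single zero set or in a single point. The latter forces the point to
be `0`, and the former contradicts `F x ≠ 0`: a polynomial map of degree `d` vanishing on all
finite sums of `d + 1` elements vanishes at `0`.
-/

open Hindman

section PolyMap

variable {G H H' : Type*} [AddCommGroup G] [AddCommGroup H] [AddCommGroup H']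

def IsPolyMap : ℕ → (G → H) → Prop
  | 0, f => ∀ x y, f x = f y
  | d + 1, f => ∀ c, IsPolyMap d fun x => f (x + c) - f x

variable {d e : ℕ} {f g : G → H}

theorem isPolyMap_const (d : ℕ) (k : H) : IsPolyMap d fun _ : G => k := by
  induction d generalizing k with
  | zero => exact fun _ _ => rfl
  | succ d ih => exact fun _ => by simpa only [sub_self] using ih 0

theorem IsPolyMap.succ (h : IsPolyMap d f) : IsPolyMap (d + 1) f := by
  induction d generalizing f with
  | zero => exact fun c x y => by simp only [h (x + c) (y + c), h x y]
  | succ d ih => exact fun c => ih (h c)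

theorem IsPolyMap.mono (h : IsPolyMap d f) (hde : d ≤ e) : IsPolyMap e f := by
  induction hde with
  | refl => exact h
  | step _ ih => exact ih.succ

theorem IsPolyMap.add (hf : IsPolyMap d f) (hg : IsPolyMap d g) :
    IsPolyMap d fun x => f x + g x := by
  induction d generalizing f g with
  | zero => exact fun x y => by simp only [hf x y, hg x y]
  | succ d ih =>
    exact fun c => by simpa only [add_sub_add_comm] using ih (hf c) (hg c)

theorem IsPolyMap.sum {α : Type*} {s : Finset α} {F : α → G → H}
    (h : ∀ a ∈ s, IsPolyMap d (F a)) : IsPolyMap d fun x => ∑ a ∈ s, F a x := by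
  simpa only [← Finset.sum_apply] using
    Finset.sum_induction F (IsPolyMap d) (fun _ _ => IsPolyMap.add) (isPolyMap_const d 0) h

theorem IsPolyMap.map (φ : H →+ H') (h : IsPolyMap d f) : IsPolyMap d fun x => φ (f x) := by
  induction d generalizing f with
  | zero => exact fun x y => congrArg φ (h x y)
  | succ d ih => exact fun c => by simpa only [map_sub] using ih (h c)

theorem AddMonoidHom.isPolyMap_one (φ : G →+ H) : IsPolyMap 1 φ := fun c x y => by
  simp only [map_add, add_sub_cancel_left]

theorem IsPolyMap.apply_zero_eq_zero_of_forall_FS (h : IsPolyMap d f) {b : Stream' G}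
    (hb : ∀ x ∈ FS b, f x = 0) : f 0 = 0 := by
  induction d generalizing f b with
  | zero => rw [h 0 b.head, hb _ (FS.head b)]
  | succ d ih =>
    have hΔ : f (0 + b.head) - f 0 = 0 := ih (h b.head) fun x hx => by
      rw [add_comm, hb _ (FS.cons b x hx), hb x (FS.tail b x hx), sub_self]
    rwa [zero_add, hb _ (FS.head b), zero_sub, neg_eq_zero] at hΔ

theorem MultilinearMap.isPolyMap_comp {R α : Type*} [Semiring R] [Fintype α] {M : α → Type*}
    [∀ a, AddCommGroup (M a)] [∀ a, Module R (M a)] [Module R H] (Φ : MultilinearMap R M H)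
    {g : ∀ a, G → M a} {d : α → ℕ} (hg : ∀ a, IsPolyMap (d a) (g a)) :
    IsPolyMap (∑ a, d a) fun x => Φ fun a => g a x := by
  classical
  suffices ∀ N (g : ∀ a, G → M a) (d : α → ℕ), (∀ a, IsPolyMap (d a) (g a)) → ∑ a, d a ≤ N →
      IsPolyMap N fun x => Φ fun a => g a x from this _ g d hg le_rfl
  intro N
  induction N with
  | zero =>
    intro g d hg hd x y
    have hd0 : ∀ a, d a = 0 := by simpa using hd
    exact congrArg Φ (funext fun a => (hd0 a ▸ hg a) x y)
  | succ N ih =>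
    intro g d hg hd c
    -- expand `Φ (g (x + c)) = Φ (Δg x + g x)` slot by slot: each term other than `Φ (g x)`
    -- takes differences in a nonempty set of slots, lowering the total degree
    have hΔ : ∀ x, Φ (fun a => g a (x + c)) - Φ (fun a => g a x) =
        ∑ s ∈ (Finset.univ : Finset (Finset α)).erase ∅,
          Φ fun a => if a ∈ s then g a (x + c) - g a x else g a x := by
      intro x
      have := Φ.map_add_univ (fun a => g a (x + c) - g a x) fun a => g a x
      rw [← Finset.add_sum_erase _ _ (Finset.mem_univ ∅), Finset.piecewise_empty] at this
      simp only [Pi.add_def, sub_add_cancel] at this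
      rw [this, add_sub_cancel_left]
      rfl
    simp only [hΔ]
    refine IsPolyMap.sum fun s hs => ?_
    by_cases hconst : ∃ a ∈ s, d a = 0
    · obtain ⟨a, ha, hda⟩ := hconst
      have hzero : ∀ x, (Φ fun a => if a ∈ s then g a (x + c) - g a x else g a x) = 0 :=
        fun x => Φ.map_coord_zero a <| by
          rw [if_pos ha, sub_eq_zero]
          exact (hda ▸ hg a) _ _
      simpa only [hzero] using isPolyMap_const N 0
    push Not at hconst
    refine ih _ (fun a => if a ∈ s then d a - 1 else d a) (fun a => ?_) ?_
    · by_cases ha : a ∈ s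
      · obtain ⟨e, he⟩ := Nat.exists_eq_succ_of_ne_zero (hconst a ha)
        simpa only [ha, if_true, he] using (he ▸ hg a) c
      · simpa only [ha, if_false] using hg a
    · obtain ⟨a, ha⟩ := Finset.nonempty_iff_ne_empty.mpr (Finset.ne_of_mem_erase hs)
      have hlt : ∑ a, (if a ∈ s then d a - 1 else d a) < ∑ a, d a :=
        Finset.sum_lt_sum (fun b _ => by split_ifs <;> omega)
          ⟨a, Finset.mem_univ a, by simp only [ha, if_true]; have := hconst a ha; omega⟩
      omega

end PolyMap

section FiniteSums

theorem eq_zero_of_FS_subset_singleton {M : Type*} [AddLeftCancelMonoid M] {b : Stream' M}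
    {t : M} (h : FS b ⊆ {t}) : t = 0 := by
  have h₁ : b.head = t := h (FS.head b)
  have h₂ : b.tail.head = t := h (FS.tail b _ (FS.head _))
  have h₃ : b.head + b.tail.head = t := h (FS.cons b _ (FS.head _))
  rwa [h₁, h₂, add_eq_left] at h₃

variable {G : Type*} [AddCommGroup G] [Infinite G]

theorem exists_zero_notMem_FS : ∃ u : Stream' G, 0 ∉ FS u := by
  classical
  choose next hnext using fun s : Finset G => Infinite.exists_notMem_finset (s.image Neg.neg)
  -- `sums m` is the set of subset sums of `u 0, …, u (m - 1)`, whose negatives `u m` avoids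
  let sums : ℕ → Finset G := fun m => Nat.rec {0} (fun _ s => s ∪ s.image (· + next s)) m
  let u : Stream' G := fun m => next (sums m)
  have hsums : ∀ m, sums (m + 1) = sums m ∪ (sums m).image (· + u m) := fun _ => rfl
  have hu : ∀ m, ∀ s ∈ sums m, s + u m ≠ 0 := fun m s hs h =>
    hnext (sums m) (Finset.mem_image.mpr ⟨s, hs, neg_eq_of_add_eq_zero_right h⟩)
  suffices ∀ a x, x ∈ FS a → ∀ m, a = u.drop m → ∀ s ∈ sums m, s + x ≠ 0 from
    ⟨u, fun h => this u 0 h 0 rfl 0 (Finset.mem_singleton_self 0) (add_zero 0)⟩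
  intro a x hx
  induction hx with
  | head' a =>
    rintro m rfl s hs
    rw [Stream'.head_drop]
    exact hu m s hs
  | tail' a x _ ih =>
    rintro m rfl s hs
    exact ih (m + 1) Stream'.tail_drop' s (hsums m ▸ Finset.mem_union_left _ hs)
  | cons' a x _ ih =>
    rintro m rfl s hs
    rw [← add_assoc, Stream'.head_drop]
    exact ih (m + 1) Stream'.tail_drop' _
      (hsums m ▸ Finset.mem_union_right _ (Finset.mem_image_of_mem _ hs))

theorem infinite_setOf_forall_ne_zero_of_isPolyMap {H α : Type*} [AddCommGroup H] {s : Set α}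
    (hs : s.Finite) {φ : α → G → H} (hφ : ∀ a ∈ s, ∃ d, IsPolyMap d (φ a))
    (h0 : ∀ a ∈ s, φ a 0 ≠ 0) : {y | ∀ a ∈ s, φ a y ≠ 0}.Infinite := by
  intro hfin
  obtain ⟨u, hu⟩ := exists_zero_notMem_FS (G := G)
  set T := {y | ∀ a ∈ s, φ a y ≠ 0}
  have hcover : FS u ⊆ ⋃₀ ((fun a => {y | φ a y = 0}) '' s ∪ (fun t => {t}) '' (T \ {0})) := by
    intro y hy
    by_cases hyT : y ∈ T
    · exact ⟨{y}, Or.inr ⟨y, ⟨hyT, fun h => hu (h ▸ hy)⟩, rfl⟩, rfl⟩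
    · simp only [T, Set.mem_ofPred_eq, not_forall, not_not] at hyT
      obtain ⟨a, ha, hya⟩ := hyT
      exact ⟨_, Or.inl ⟨a, ha, rfl⟩, hya⟩
  obtain ⟨c, hc, b, hb⟩ :=
    FS_partition_regular u _ ((hs.image _).union (hfin.sdiff.image _)) hcover
  rcases hc with ⟨a, ha, rfl⟩ | ⟨t, ht, rfl⟩
  · obtain ⟨d, hd⟩ := hφ a ha
    exact h0 a ha (hd.apply_zero_eq_zero_of_forall_FS hb)
  · exact ht.2 (eq_zero_of_FS_subset_singleton hb)

end FiniteSums

section Polyring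

variable [AddCommGroup K] {ops : ∀ i, (Fin (ar i) → K) → K}

def IsPolyring.multilinearMap (hpoly : IsPolyring ops) (i : ι) :
    MultilinearMap ℤ (fun _ : Fin (ar i) => K) K where
  toFun := ops i
  map_update_add' m j x y := by
    obtain rfl : ‹DecidableEq (Fin (ar i))› = instDecidableEqFin _ := Subsingleton.elim _ _
    exact hpoly i j m x y
  map_update_smul' m j c x := by
    obtain rfl : ‹DecidableEq (Fin (ar i))› = instDecidableEqFin _ := Subsingleton.elim _ _
    exact map_zsmul (AddMonoidHom.mk' (fun y => ops i (Function.update m j y)) (hpoly i j m)) c x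

theorem PTerm.exists_isPolyMap_eval_comp (hpoly : IsPolyring ops) (F : PTerm K ι ar n)
    {G : Type*} [AddCommGroup G] {p : G → Fin n → K} {d : ℕ} (hp : IsPolyMap d p) :
    ∃ e, IsPolyMap e fun y => F.eval ops (p y) := by
  induction F with
  | var k => exact ⟨d, hp.map (Pi.evalAddMonoidHom _ k)⟩
  | const c => exact ⟨0, isPolyMap_const 0 c⟩
  | add s t hs ht =>
    obtain ⟨e₁, h₁⟩ := hs
    obtain ⟨e₂, h₂⟩ := ht
    exact ⟨max e₁ e₂, (h₁.mono (le_max_left _ _)).add (h₂.mono (le_max_right _ _))⟩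
  | op i ts ih =>
    choose e he using ih
    exact ⟨_, (hpoly.multilinearMap i).isPolyMap_comp he⟩

theorem exists_finite_terms_of_mem_nhds_zariski {A : Set (Fin n → K)} {x : Fin n → K}
    (h : A ∈ @nhds _ (zariskiTopology ops n) x) :
    ∃ Fs : Set (PTerm K ι ar n), Fs.Finite ∧ (∀ F ∈ Fs, F.eval ops x ≠ 0) ∧
      ∀ a, (∀ F ∈ Fs, F.eval ops a ≠ 0) → a ∈ A := by
  let := zariskiTopology ops n
  have : Nonempty (PTerm K ι ar n) := ⟨.const 0⟩
  obtain ⟨_, ⟨f, ⟨hf, hfsub⟩, rfl⟩, hxf, hfA⟩ :=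
    (TopologicalSpace.isTopologicalBasis_of_subbasis rfl).mem_nhds_iff.mp h
  choose! term hterm using fun U (hU : U ∈ f) => hfsub hU
  refine ⟨term '' f, hf.image _, ?_, fun a ha => hfA fun U hU => ?_⟩
  · rintro _ ⟨U, hU, rfl⟩
    have hxU := hxf U hU
    rw [hterm U hU] at hxU
    exact hxU
  · rw [hterm U hU]
    exact ha _ ⟨U, hU, rfl⟩

end Polyring

theorem stmt_18_general (K ι : Type) [AddCommGroup K] [Infinite K] (ar : ι → ℕ)
    (ops : ∀ i, (Fin (ar i) → K) → K) (hpoly : IsPolyring ops)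
    (n : ℕ) (A : Set (Fin n → K))
    (hA : ∃ j : Fin n, ∀ a : Fin n → K,
      {x : K | Function.update a j x ∈ A}.Finite) :
    @interior _ (zariskiTopology ops n) A = ∅ := by
  let := zariskiTopology ops n
  refine Set.eq_empty_of_forall_notMem fun x hx => ?_
  obtain ⟨j, hj⟩ := hA
  obtain ⟨Fs, hFs, hFx, hFsA⟩ :=
    exists_finite_terms_of_mem_nhds_zariski (mem_interior_iff_mem_nhds.mp hx)
  have hline : IsPolyMap 1 fun y : K => x + Pi.single j y :=
    ((isPolyMap_const 0 x).mono zero_le_one).add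
      (AddMonoidHom.single (fun _ => K) j).isPolyMap_one
  have hupdate : ∀ y, Function.update x j (x j + y) = x + Pi.single j y := fun y => by
    ext k
    by_cases hk : k = j <;> simp [hk]
  refine infinite_setOf_forall_ne_zero_of_isPolyMap hFs
    (fun F _ => F.exists_isPolyMap_eval_comp hpoly hline) (by simpa using hFx) <|
    ((hj x).preimage (add_right_injective (x j)).injOn).subset fun y hy => ?_
  simpa only [Set.mem_preimage, Set.mem_ofPred_eq, hupdate] using hFsA _ hy

/-- The Key Theorem: if `K` is an infinite polyring, `n ≥ 1`, and `A ⊆ Kⁿ` is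
finite-valued (for some coordinate `j`, all sections of `A` along `j` are
finite), then `A` has empty interior in the Zariski topology of `Kⁿ`. -/
theorem stmt_18 (K ι : Type) [AddCommGroup K] [Infinite K] (ar : ι → ℕ)
    (ops : ∀ i, (Fin (ar i) → K) → K) (hpoly : IsPolyring ops)
    (n : ℕ) (hn : 1 ≤ n) (A : Set (Fin n → K))
    (hA : ∃ j : Fin n, ∀ a : Fin n → K,
      {x : K | Function.update a j x ∈ A}.Finite) :
    @interior _ (zariskiTopology ops n) A = ∅ :=
  stmt_18_general K ι ar ops hpoly n A hA
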